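/- Let $A$ be a commutative ring, and let $g_1,\ldots,g_n$ and $c_1,\ldots,c_n$ be elements of $A$ such that $\sum_{i=1}^n c_i g_i^k = 0$ for all $k \in \mathbb{N}$. Then for each $i \in \{1,\ldots,n\}$, we have $c_i \prod_{j \neq i} (g_i - g_j) = 0$. -/
import Mathlib


/-- **Theorem (variant of linear independence of grouplikes, commutative-ring version).**
If `g 1, …, g n` and `c 1, …, c n` are elements of a commutative ring `A` such that
`∑ i, c i * g i ^ k = 0` for all `k : ℕ`, then `c i * ∏_{j ≠ i} (g i - g j) = 0` for each `i`. -/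
theorem stmt0 {A : Type*} [CommRing A] (n : ℕ) (g c : Fin n → A)
    (h : ∀ k : ℕ, ∑ i, c i * g i ^ k = 0) :
    ∀ i : Fin n, c i * ∏ j ∈ Finset.univ.erase i, (g i - g j) = 0 := by
  have key : ∀ p : Polynomial A, ∑ j, c j * p.eval (g j) = 0 := by
    intro p
    calc ∑ j, c j * p.eval (g j)
        = ∑ j, ∑ k ∈ Finset.range (p.natDegree + 1),
            p.coeff k * (c j * g j ^ k) := by
          simp_rw [Polynomial.eval_eq_sum_range, Finset.mul_sum, mul_left_comm]
      _ = ∑ k ∈ Finset.range (p.natDegree + 1), p.coeff k * ∑ j, c j * g j ^ k := by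
          rw [Finset.sum_comm]; simp_rw [Finset.mul_sum]
      _ = 0 := by simp [h]
  intro i
  have := key (∏ j ∈ Finset.univ.erase i, (Polynomial.X - Polynomial.C (g j)))
  rw [Finset.sum_eq_single i] at this
  · simpa [Polynomial.eval_prod] using this
  · intro j _ hj
    rw [Polynomial.eval_prod, Finset.prod_eq_zero (Finset.mem_erase.mpr ⟨hj, Finset.mem_univ j⟩)]
    · ring
    · simp
  · simp
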